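/- Every matrix of SL_3(𝔽_7) lying in any of the six sets [0,2], [1,3], [2,0], [3,1], [3,4], [4,3] has order 19, and every matrix lying in any of the twelve sets [0,1], [0,4], [1,0], [1,5], [2,5], [2,6], [4,0], [4,6], [5,1], [5,2], [6,2], [6,4] has order 57. -/
import Mathlib


open Matrix Polynomial

abbrev SL3 := Matrix.SpecialLinearGroup (Fin 3) (ZMod 7)

/-- The set `[i,j]` of matrices in `SL₃(𝔽₇)` with characteristic polynomial
`X³ - i·X² + j·X - 1`. -/
def classSet (i j : ZMod 7) : Set SL3 :=
  {M : SL3 | M.val.charpoly = X ^ 3 - C i * X ^ 2 + C j * X - 1}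

/-- The six pairs whose classes consist of order-19 elements. -/
def pairs19 : List (ZMod 7 × ZMod 7) :=
  [(0,2),(1,3),(2,0),(3,1),(3,4),(4,3)]

/-- The twelve pairs whose classes consist of order-57 elements. -/
def pairs57 : List (ZMod 7 × ZMod 7) :=
  [(0,1),(0,4),(1,0),(1,5),(2,5),(2,6),(4,0),(4,6),(5,1),(5,2),(6,2),(6,4)]

instance fact7 : Fact (Nat.Prime 7) := ⟨by norm_num⟩

abbrev Mat := Matrix (Fin 3) (Fin 3) (ZMod 7)

lemma seven_eq_zero : (7 : Mat) = 0 := by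
  rw [← map_ofNat (algebraMap (ZMod 7) Mat) 7, show (7 : ZMod 7) = 0 by decide, map_zero]

lemma minpoly_eq_charpoly (m : Mat) (h : Irreducible m.charpoly) :
    minpoly (ZMod 7) m = m.charpoly := by
  have hint : IsIntegral (ZMod 7) m := Matrix.isIntegral m
  refine Polynomial.eq_of_monic_of_associated (minpoly.monic hint) (Matrix.charpoly_monic m) ?_
  obtain ⟨c, hc⟩ := Matrix.minpoly_dvd_charpoly m
  rcases h.isUnit_or_isUnit hc with h1 | h1
  · exfalso
    have := Polynomial.natDegree_eq_zero_of_isUnit h1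
    have := minpoly.natDegree_pos hint
    omega
  · exact ⟨h1.unit, by rw [h1.unit_spec]; exact hc.symm⟩

lemma aeval_ne' (m : Mat) (h : Irreducible m.charpoly) {s : Polynomial (ZMod 7)}
    (hs : s ≠ 0) (hdeg : s.natDegree < 3) : aeval m s ≠ 0 := by
  intro h0
  have hdvd := minpoly.dvd (ZMod 7) m h0
  have hle := Polynomial.natDegree_le_of_dvd hdvd hs
  rw [minpoly_eq_charpoly m h, Matrix.charpoly_natDegree_eq_dim, Fintype.card_fin] at hle
  omega

lemma irred (i j : ZMod 7) (hroot : ∀ x : ZMod 7, x ^ 3 - i * x ^ 2 + j * x - 1 ≠ 0)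
    (m : Mat) (hm : m.charpoly = X ^ 3 - C i * X ^ 2 + C j * X - 1) :
    Irreducible m.charpoly := by
  have h3 : m.charpoly.natDegree = 3 := by
    rw [Matrix.charpoly_natDegree_eq_dim, Fintype.card_fin]
  rw [Polynomial.irreducible_iff_roots_eq_zero_of_degree_le_three (by omega) (by omega)]
  rw [Multiset.eq_zero_iff_forall_notMem]
  intro x hx
  rw [Polynomial.mem_roots (Matrix.charpoly_monic m).ne_zero] at hx
  rw [Polynomial.IsRoot, hm] at hx
  apply hroot x
  simpa using hx

lemma quad_coeffs {a b c : ZMod 7} (h : C a * X ^ 2 + C b * X + C c = 0) :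
    a = 0 ∧ b = 0 ∧ c = 0 := by
  refine ⟨?_, ?_, ?_⟩
  · have := congrArg (fun f => Polynomial.coeff f 2) h; simpa using this
  · have := congrArg (fun f => Polynomial.coeff f 1) h; simpa using this
  · have := congrArg (fun f => Polynomial.coeff f 0) h; simpa using this

lemma ord19_aux (i j : ZMod 7) (q s : Polynomial (ZMod 7))
    (hroot : ∀ x : ZMod 7, x ^ 3 - i * x ^ 2 + j * x - 1 ≠ 0)
    (hq : (X : Polynomial (ZMod 7)) ^ 19 - 1
        = (X ^ 3 - C i * X ^ 2 + C j * X - 1) * q + 7 * s) :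
    ∀ M ∈ classSet i j, orderOf M = 19 := by
  intro M hM
  replace hM : M.val.charpoly = X ^ 3 - C i * X ^ 2 + C j * X - 1 := hM
  have hirr := irred i j hroot M.val hM
  have hz : aeval M.val ((X : Polynomial (ZMod 7)) ^ 3 - C i * X ^ 2 + C j * X - 1) = 0 := by
    rw [← hM]; exact Matrix.aeval_self_charpoly _
  have h19 : M.val ^ 19 = 1 := by
    have h := congrArg (aeval M.val) hq
    rw [map_sub, map_pow, aeval_X, _root_.map_one, map_add, _root_.map_mul, _root_.map_mul, hz, zero_mul, zero_add,
      map_ofNat, seven_eq_zero, zero_mul, sub_eq_zero] at h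
    exact h
  haveI : Fact (Nat.Prime 19) := ⟨by norm_num⟩
  have hMpow : M ^ 19 = 1 := by
    apply Subtype.coe_injective
    show ((M ^ 19 : SL3) : Mat) = ((1 : SL3) : Mat)
    rw [Matrix.SpecialLinearGroup.coe_pow, Matrix.SpecialLinearGroup.coe_one]
    exact h19
  have hM1 : M ≠ 1 := by
    intro h1
    have hm1 : M.val = 1 := by rw [h1]; rfl
    refine aeval_ne' M.val hirr (s := X - C 1) ?_ ?_ ?_
    · exact Polynomial.X_sub_C_ne_zero 1
    · rw [Polynomial.natDegree_X_sub_C]; omega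
    · rw [map_sub, aeval_X, aeval_C, hm1]; simp
  exact orderOf_eq_prime hMpow hM1

lemma ord57_aux (i j a b c : ZMod 7) (q s q2 s2 : Polynomial (ZMod 7))
    (hroot : ∀ x : ZMod 7, x ^ 3 - i * x ^ 2 + j * x - 1 ≠ 0)
    (hcond : (i ≠ 0 ∨ j ≠ 0) ∧ (a ≠ 0 ∨ b ≠ 0 ∨ c ≠ 1))
    (hq : (X : Polynomial (ZMod 7)) ^ 19
        = (X ^ 3 - C i * X ^ 2 + C j * X - 1) * q + 7 * s + (C a * X ^ 2 + C b * X + C c))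
    (hq2 : (C a * X ^ 2 + C b * X + C c) ^ 3 - 1
        = (X ^ 3 - C i * X ^ 2 + C j * X - 1) * q2 + 7 * s2) :
    ∀ M ∈ classSet i j, orderOf M = 57 := by
  intro M hM
  replace hM : M.val.charpoly = X ^ 3 - C i * X ^ 2 + C j * X - 1 := hM
  have hirr := irred i j hroot M.val hM
  have hz : aeval M.val ((X : Polynomial (ZMod 7)) ^ 3 - C i * X ^ 2 + C j * X - 1) = 0 := by
    rw [← hM]; exact Matrix.aeval_self_charpoly _
  have h19 : M.val ^ 19 = aeval M.val (C a * X ^ 2 + C b * X + C c) := by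
    have h := congrArg (aeval M.val) hq
    rw [map_pow, aeval_X, map_add, map_add, _root_.map_mul, _root_.map_mul, hz, zero_mul,
      zero_add, map_ofNat, seven_eq_zero, zero_mul, zero_add] at h
    exact h
  have h3 : aeval M.val ((C a * X ^ 2 + C b * X + C c) ^ 3) = 1 := by
    have h := congrArg (aeval M.val) hq2
    rw [map_sub, _root_.map_one, map_add, _root_.map_mul, _root_.map_mul, hz, zero_mul, zero_add,
      map_ofNat, seven_eq_zero, zero_mul, sub_eq_zero] at h
    exact h
  have h57 : M.val ^ 57 = 1 := by
    rw [show (57 : ℕ) = 19 * 3 from rfl, pow_mul, h19, ← map_pow, h3]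
  have hM57 : M ^ 57 = 1 := by
    apply Subtype.coe_injective
    show ((M ^ 57 : SL3) : Mat) = ((1 : SL3) : Mat)
    rw [Matrix.SpecialLinearGroup.coe_pow, Matrix.SpecialLinearGroup.coe_one]
    exact h57
  have hne3 : M ^ 3 ≠ 1 := by
    intro h1
    have hm3 : M.val ^ 3 = 1 := by
      rw [← Matrix.SpecialLinearGroup.coe_pow, h1, Matrix.SpecialLinearGroup.coe_one]
    have hx3 : aeval M.val ((X : Polynomial (ZMod 7)) ^ 3 - 1) = 0 := by
      rw [map_sub, map_pow, aeval_X, _root_.map_one, hm3, sub_self]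
    have hsplit : (X : Polynomial (ZMod 7)) ^ 3 - 1
        = (X ^ 3 - C i * X ^ 2 + C j * X - 1) + (C i * X ^ 2 + C (-j) * X + C 0) := by
      rw [map_neg, map_zero]; ring
    rw [hsplit, map_add, hz, zero_add] at hx3
    refine aeval_ne' M.val hirr ?_ ?_ hx3
    · intro h0
      obtain ⟨hi, hj, -⟩ := quad_coeffs h0
      rcases hcond.1 with h | h
      · exact h hi
      · exact h (by rw [← neg_neg j, hj, neg_zero])
    · exact lt_of_le_of_lt Polynomial.natDegree_quadratic_le (by norm_num)
  have hne19 : M ^ 19 ≠ 1 := by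
    intro h1
    have hm19 : M.val ^ 19 = 1 := by
      rw [← Matrix.SpecialLinearGroup.coe_pow, h1, Matrix.SpecialLinearGroup.coe_one]
    have hx : aeval M.val (C a * X ^ 2 + C b * X + C (c - 1)) = 0 := by
      have e : (C a * X ^ 2 + C b * X + C (c - 1) : Polynomial (ZMod 7))
          = (C a * X ^ 2 + C b * X + C c) - 1 := by
        rw [map_sub, _root_.map_one]; ring
      rw [e, map_sub, _root_.map_one, ← h19, hm19, sub_self]
    refine aeval_ne' M.val hirr ?_ ?_ hx
    · intro h0
      obtain ⟨ha, hb, hc⟩ := quad_coeffs h0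
      rcases hcond.2 with h | h | h
      · exact h ha
      · exact h hb
      · exact h (by rw [← sub_eq_zero]; exact hc)
    · exact lt_of_le_of_lt Polynomial.natDegree_quadratic_le (by norm_num)
  have hd : orderOf M ∣ 57 := orderOf_dvd_of_pow_eq_one hM57
  have hmem : orderOf M ∈ Nat.divisors 57 := Nat.mem_divisors.mpr ⟨hd, by norm_num⟩
  have hdiv : Nat.divisors 57 = {1, 3, 19, 57} := by decide
  rw [hdiv] at hmem
  simp only [Finset.mem_insert, Finset.mem_singleton] at hmem
  rcases hmem with h | h | h | h
  · exact absurd (by rw [orderOf_eq_one_iff.mp h]; simp) hne3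
  · exact absurd (orderOf_dvd_iff_pow_eq_one.mp (by rw [h])) hne3
  · exact absurd (orderOf_dvd_iff_pow_eq_one.mp (by rw [h])) hne19
  · exact h

set_option maxHeartbeats 4000000 in
theorem orders_of_classes :
    (∀ p ∈ pairs19, ∀ M ∈ classSet p.1 p.2, orderOf M = 19) ∧
    (∀ p ∈ pairs57, ∀ M ∈ classSet p.1 p.2, orderOf M = 57) := by
  constructor
  · intro p hp
    simp only [pairs19, List.mem_cons, List.not_mem_nil, or_false] at hp
    rcases hp with rfl | rfl | rfl | rfl | rfl | rfl
    · exact ord19_aux 0 2 (X^16 + 5*X^14 + X^13 + 4*X^12 + 3*X^11 + 5*X^9 + 3*X^8 + 4*X^7 + 6*X^6 + 2*X^5 + 6*X^4 + 2*X^3 + 4*X^2 + 2*X + 1) (-1*X^17 + -2*X^15 + -1*X^13 + -1*X^12 + -2*X^10 + -1*X^9 + -1*X^8 + -2*X^7 + -2*X^5 + -1*X^3) (by decide) (by simp only [map_ofNat, C_0, C_1]; ring)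
    · exact ord19_aux 1 3 (X^16 + X^15 + 5*X^14 + 3*X^13 + 3*X^12 + 6*X^11 + 6*X^9 + 5*X^8 + X^7 + 6*X^6 + X^5 + 5*X^4 + X^3 + X^2 + 3*X + 1) (-1*X^17 + -2*X^15 + -1*X^14 + -3*X^12 + X^11 + -2*X^10 + -2*X^9 + X^8 + -3*X^7 + X^6 + -2*X^5 + -1*X^2) (by decide) (by simp only [map_ofNat, C_0, C_1]; ring)
    · exact ord19_aux 2 0 (X^16 + 2*X^15 + 4*X^14 + 2*X^13 + 6*X^12 + 2*X^11 + 6*X^10 + 4*X^9 + 3*X^8 + 5*X^7 + 3*X^5 + 4*X^4 + X^3 + 5*X^2 + 1) (X^16 + 2*X^14 + 2*X^12 + X^11 + X^10 + 2*X^9 + X^7 + X^6 + 2*X^4 + X^2) (by decide) (by simp only [map_ofNat, C_0, C_1]; ring)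
    · exact ord19_aux 3 1 (X^16 + 3*X^15 + X^14 + X^13 + 5*X^12 + X^11 + 6*X^10 + X^9 + 5*X^8 + 6*X^7 + 6*X^5 + 3*X^4 + 3*X^3 + 5*X^2 + X + 1) (X^17 + 2*X^14 + -1*X^13 + 3*X^12 + -1*X^11 + 2*X^10 + 2*X^9 + -1*X^8 + 3*X^7 + X^5 + 2*X^4 + X^2) (by decide) (by simp only [map_ofNat, C_0, C_1]; ring)
    · exact ord19_aux 3 4 (X^16 + 3*X^15 + 5*X^14 + 4*X^13 + 2*X^12 + 2*X^11 + 2*X^10 + X^8 + 5*X^7 + 4*X^6 + 3*X^4 + 6*X^3 + 6*X^2 + 4*X + 1) (-1*X^15 + -1*X^14 + -1*X^11 + X^9 + -1*X^8 + -2*X^7 + X^6 + -1*X^4 + -1*X^3 + -1*X^2) (by decide) (by simp only [map_ofNat, C_0, C_1]; ring)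
    · exact ord19_aux 4 3 (X^16 + 4*X^15 + 6*X^14 + 6*X^13 + 3*X^12 + 4*X^10 + 5*X^9 + X^8 + 2*X^6 + 2*X^5 + 2*X^4 + 4*X^3 + 5*X^2 + 3*X + 1) (X^17 + X^16 + X^15 + -1*X^13 + 2*X^12 + X^11 + -1*X^10 + X^8 + X^5 + X^4) (by decide) (by simp only [map_ofNat, C_0, C_1]; ring)
  · intro p hp
    simp only [pairs57, List.mem_cons, List.not_mem_nil, or_false] at hp
    rcases hp with rfl | rfl | rfl | rfl | rfl | rfl | rfl | rfl | rfl | rfl | rfl | rfl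
    · exact ord57_aux 0 1 0 0 2 (X^16 + 6*X^14 + X^13 + X^12 + 5*X^11 + 3*X^9 + 5*X^8 + 4*X^7 + 5*X^6 + X^5 + 6*X^4 + 4*X^3 + 2*X^2 + 2*X + 2) (-1*X^17 + -1*X^15 + -1*X^12 + -1*X^10 + -1*X^9 + -1*X^7 + -1*X^5) (0:Polynomial (ZMod 7)) ((1:Polynomial (ZMod 7))) (by decide) (by decide) (by simp only [map_ofNat, C_0, C_1]; ring) (by simp only [map_ofNat, C_0, C_1]; ring)
    · exact ord57_aux 0 4 0 0 4 (X^16 + 3*X^14 + X^13 + 2*X^12 + 6*X^11 + 6*X^9 + 6*X^8 + 4*X^7 + 3*X^6 + 4*X^5 + 6*X^4 + X^3 + X^2 + 2*X + 4) (-1*X^17 + -2*X^15 + -1*X^14 + -1*X^13 + -4*X^12 + -4*X^10 + -3*X^9 + -2*X^8 + -2*X^7 + -2*X^6 + -3*X^5 + -1*X^3 + -1*X^2 + -2*X) (0:Polynomial (ZMod 7)) ((9:Polynomial (ZMod 7))) (by decide) (by decide) (by simp only [map_ofNat, C_0, C_1]; ring) (by simp only [map_ofNat, C_0, C_1]; 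ring)
    · exact ord57_aux 1 0 0 0 4 (X^16 + X^15 + X^14 + 2*X^13 + 3*X^12 + 4*X^11 + 6*X^10 + 2*X^9 + 6*X^8 + 5*X^7 + 6*X^5 + 4*X^4 + 4*X^3 + 3*X^2 + 4) (X^12 + X^10 + X^9 + X^7 + X^5 + X^4 + X^2) (0:Polynomial (ZMod 7)) ((9:Polynomial (ZMod 7))) (by decide) (by decide) (by simp only [map_ofNat, C_0, C_1]; ring) (by simp only [map_ofNat, C_0, C_1]; ring)
    · exact ord57_aux 1 5 0 0 2 (X^16 + X^15 + 3*X^14 + 6*X^13 + 6*X^12 + 4*X^10 + 3*X^9 + 4*X^8 + 4*X^6 + X^5 + 2*X^4 + X^3 + 6*X^2 + 3*X + 2) (-1*X^17 + -1*X^16 + -2*X^15 + -3*X^14 + -4*X^13 + X^12 + -3*X^11 + -1*X^10 + -3*X^9 + X^8 + -3*X^7 + -2*X^5 + -4*X^3 + -1*X^2 + -1*X) (0:Polynomial (ZMod 7)) ((1:Polynomial (ZMod 7))) (by decide) (by decide) (by simp only [map_ofNat, C_0, C_1]; ring) (by simp only [map_ofNat, C_0, C_1]; ring)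
    · exact ord57_aux 2 5 0 0 2 (X^16 + 2*X^15 + 6*X^14 + 3*X^13 + 6*X^12 + 3*X^11 + 5*X^9 + 6*X^8 + X^7 + 5*X^6 + 4*X^5 + 5*X^4 + 2*X^3 + 4*X^2 + 3*X + 2) (-1*X^17 + -4*X^15 + -3*X^13 + -2*X^12 + X^11 + -2*X^10 + -4*X^9 + X^8 + -3*X^7 + -1*X^6 + -3*X^5 + -2*X^3 + -1*X^2 + -1*X) (0:Polynomial (ZMod 7)) ((1:Polynomial (ZMod 7))) (by decide) (by decide) (by simp only [map_ofNat, C_0, C_1]; ring) (by simp only [map_ofNat, C_0, C_1]; ring)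
    · exact ord57_aux 2 6 0 0 4 (X^16 + 2*X^15 + 5*X^14 + 6*X^13 + 5*X^12 + 4*X^10 + 6*X^9 + 2*X^8 + X^6 + 4*X^5 + 2*X^4 + 2*X^3 + 3*X^2 + 3*X + 4) (-1*X^17 + -1*X^16 + -3*X^15 + -3*X^14 + -4*X^13 + X^12 + -2*X^11 + -4*X^10 + -1*X^9 + -3*X^6 + -1*X^5 + -1*X^4 + -2*X^3 + -1*X^2 + -3*X) (0:Polynomial (ZMod 7)) ((9:Polynomial (ZMod 7))) (by decide) (by decide) (by simp only [map_ofNat, C_0, C_1]; ring) (by simp only [map_ofNat, C_0, C_1]; ring)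
    · exact ord57_aux 4 0 0 0 2 (X^16 + 4*X^15 + 2*X^14 + 2*X^13 + 5*X^12 + X^11 + 6*X^10 + X^9 + 5*X^8 + 5*X^7 + 5*X^5 + 4*X^4 + 2*X^3 + 6*X^2 + 2) (2*X^17 + X^16 + X^15 + 3*X^14 + 4*X^12 + 3*X^10 + 3*X^9 + 3*X^7 + 2*X^6 + X^5 + 4*X^4 + 2*X^2) (0:Polynomial (ZMod 7)) ((1:Polynomial (ZMod 7))) (by decide) (by decide) (by simp only [map_ofNat, C_0, C_1]; ring) (by simp only [map_ofNat, C_0, C_1]; ring)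
    · exact ord57_aux 4 6 0 0 4 (X^16 + 4*X^15 + 3*X^14 + 3*X^13 + 5*X^12 + 5*X^11 + 3*X^9 + 3*X^8 + X^7 + 3*X^6 + 2*X^5 + 5*X^4 + 4*X^3 + 2*X^2 + 3*X + 4) (X^17 + -2*X^16 + -1*X^15 + -1*X^13 + -4*X^12 + 2*X^11 + -1*X^10 + -2*X^9 + X^8 + -2*X^7 + X^6 + -2*X^5 + -2*X^4 + -3*X) (0:Polynomial (ZMod 7)) ((9:Polynomial (ZMod 7))) (by decide) (by decide) (by simp only [map_ofNat, C_0, C_1]; ring) (by simp only [map_ofNat, C_0, C_1]; ring)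
    · exact ord57_aux 5 1 0 0 4 (X^16 + 5*X^15 + 3*X^14 + 4*X^13 + X^12 + 4*X^11 + 2*X^10 + 2*X^8 + 5*X^7 + 2*X^6 + 3*X^4 + 3*X^3 + 5*X^2 + 4*X + 4) (3*X^17 + X^16 + 3*X^15 + 3*X^13 + X^12 + X^10 + 3*X^9 + X^8 + 2*X^6 + X^5 + 3*X^4 + 2*X^3 + 3*X^2) (0:Polynomial (ZMod 7)) ((9:Polynomial (ZMod 7))) (by decide) (by decide) (by simp only [map_ofNat, C_0, C_1]; ring) (by simp only [map_ofNat, C_0, C_1]; ring)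
    · exact ord57_aux 5 2 0 0 4 (X^16 + 5*X^15 + 2*X^14 + X^13 + 6*X^12 + 2*X^11 + 6*X^10 + 4*X^9 + 3*X^8 + 6*X^7 + 5*X^5 + 3*X^4 + 5*X^3 + 3*X^2 + X + 4) (3*X^17 + 4*X^14 + -1*X^13 + 4*X^12 + X^11 + X^10 + 4*X^9 + -2*X^8 + 4*X^7 + 3*X^5 + X^4 + 3*X^2 + -1*X) (0:Polynomial (ZMod 7)) ((9:Polynomial (ZMod 7))) (by decide) (by decide) (by simp only [map_ofNat, C_0, C_1]; ring) (by simp only [map_ofNat, C_0, C_1]; ring)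
    · exact ord57_aux 6 2 0 0 2 (X^16 + 6*X^15 + 6*X^14 + 4*X^13 + 4*X^12 + X^11 + 2*X^10 + 4*X^8 + 5*X^7 + X^6 + 3*X^4 + 5*X^3 + 3*X^2 + 4*X + 2) (4*X^17 + 3*X^16 + 2*X^15 + 3*X^14 + 2*X^12 + -1*X^11 + 3*X^10 + 3*X^9 + 2*X^6 + 3*X^5 + X^4 + 3*X^3 + X^2) (0:Polynomial (ZMod 7)) ((1:Polynomial (ZMod 7))) (by decide) (by decide) (by simp only [map_ofNat, C_0, C_1]; ring) (by simp only [map_ofNat, C_0, C_1]; ring)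
    · exact ord57_aux 6 4 0 0 2 (X^16 + 6*X^15 + 4*X^14 + X^13 + 3*X^12 + 4*X^11 + 6*X^10 + 2*X^9 + 6*X^8 + 6*X^7 + 3*X^5 + 3*X^4 + 6*X^3 + 6*X^2 + X + 2) (4*X^17 + -1*X^15 + 2*X^14 + X^13 + 3*X^12 + -2*X^11 + 4*X^10 + 2*X^9 + -3*X^8 + 3*X^7 + 3*X^5 + 2*X^4 + -2*X^3 + 2*X^2 + -1*X) (0:Polynomial (ZMod 7)) ((1:Polynomial (ZMod 7))) (by decide) (by decide) (by simp only [map_ofNat, C_0, C_1]; ring) (by simp only [map_ofNat, C_0, C_1]; ring)
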